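/- Suppose a one-parameter family of maps T_t : C(M,ℝ) → C(M,ℝ) (t ≥ 0) satisfies the semigroup property, monotonicity (φ ≤ ψ ⟹ T_tφ ≤ T_tψ), and the translation property T_t(φ + c) ≤ T_tφ + c for constants c ≥ 0. If ū := limsup_{t→∞} T_tφ exists in C(M,ℝ), then ū ≤ T_t ū for every t ≥ 0; consequently t ↦ T_t ū is pointwise non-decreasing. -/

import Mathlib

open Filter

/-!
For large `r`, once `T_{r-t} φ ≤ ū + ε`, monotonicity and the translation property give
`T_r φ = T_t (T_{r-t} φ) ≤ T_t (ū + ε) ≤ T_t ū + ε`; passing to the limsup in `r` yields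
`ū ≤ T_t ū + ε`. Monotonicity of the orbit then follows from
`T_{t'} ū = T_t (T_{t'-t} ū) ≥ T_t ū`.
-/

section Semigroup

variable {M : Type*} [TopologicalSpace M] {T : ℝ → C(M, ℝ) → C(M, ℝ)}

theorem semigroup_eq_apply_sub
    (hsemi : ∀ t s : ℝ, 0 ≤ t → 0 ≤ s → ∀ ψ : C(M, ℝ), T (t + s) ψ = T t (T s ψ))
    {t t' : ℝ} (ht : 0 ≤ t) (htt' : t ≤ t') (ψ : C(M, ℝ)) :
    T t' ψ = T t (T (t' - t) ψ) := by
  simpa using hsemi t (t' - t) ht (sub_nonneg.2 htt') ψ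

theorem apply_le_apply_add_of_le_add
    (hmono : ∀ t : ℝ, 0 ≤ t → ∀ ψ χ : C(M, ℝ), (∀ x, ψ x ≤ χ x) → ∀ x, T t ψ x ≤ T t χ x)
    (htrans : ∀ t : ℝ, 0 ≤ t → ∀ c : ℝ, 0 ≤ c → ∀ ψ : C(M, ℝ),
      ∀ x, T t (ψ + ContinuousMap.const M c) x ≤ T t ψ x + c)
    {t c : ℝ} (ht : 0 ≤ t) (hc : 0 ≤ c) {ψ u : C(M, ℝ)} (hψ : ∀ y, ψ y ≤ u y + c) (x : M) :
    T t ψ x ≤ T t u x + c :=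
  calc T t ψ x ≤ T t (u + ContinuousMap.const M c) x := hmono t ht _ _ hψ x
    _ ≤ T t u x + c := htrans t ht c hc u x

theorem eventually_apply_le_semigroup_apply_add
    (hsemi : ∀ t s : ℝ, 0 ≤ t → 0 ≤ s → ∀ ψ : C(M, ℝ), T (t + s) ψ = T t (T s ψ))
    (hmono : ∀ t : ℝ, 0 ≤ t → ∀ ψ χ : C(M, ℝ), (∀ x, ψ x ≤ χ x) → ∀ x, T t ψ x ≤ T t χ x)
    (htrans : ∀ t : ℝ, 0 ≤ t → ∀ c : ℝ, 0 ≤ c → ∀ ψ : C(M, ℝ),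
      ∀ x, T t (ψ + ContinuousMap.const M c) x ≤ T t ψ x + c)
    {φ u : C(M, ℝ)} {ε : ℝ} (hε : 0 ≤ ε) (hφ : ∀ᶠ s in atTop, ∀ y, T s φ y ≤ u y + ε)
    {t : ℝ} (ht : 0 ≤ t) (x : M) :
    ∀ᶠ r in atTop, T r φ x ≤ T t u x + ε := by
  filter_upwards [(tendsto_atTop_add_const_right atTop (-t) tendsto_id).eventually hφ,
    eventually_ge_atTop t] with r hr htr
  rw [semigroup_eq_apply_sub hsemi ht htr]
  exact apply_le_apply_add_of_le_add hmono htrans ht hε (by simpa [← sub_eq_add_neg] using hr) x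

theorem semigroup_apply_mono_of_le_apply
    (hsemi : ∀ t s : ℝ, 0 ≤ t → 0 ≤ s → ∀ ψ : C(M, ℝ), T (t + s) ψ = T t (T s ψ))
    (hmono : ∀ t : ℝ, 0 ≤ t → ∀ ψ χ : C(M, ℝ), (∀ x, ψ x ≤ χ x) → ∀ x, T t ψ x ≤ T t χ x)
    {u : C(M, ℝ)} (hu : ∀ t : ℝ, 0 ≤ t → ∀ x, u x ≤ T t u x)
    {t t' : ℝ} (ht : 0 ≤ t) (htt' : t ≤ t') (x : M) :
    T t u x ≤ T t' u x := by
  rw [semigroup_eq_apply_sub hsemi ht htt']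
  exact hmono t ht _ _ (hu _ (sub_nonneg.2 htt')) x

end Semigroup

theorem limsup_le_semigroup_image_general
    {M : Type*} [MetricSpace M]
    (T : ℝ → C(M, ℝ) → C(M, ℝ))
    (hsemi : ∀ t s : ℝ, 0 ≤ t → 0 ≤ s → ∀ ψ : C(M, ℝ), T (t + s) ψ = T t (T s ψ))
    (hmono : ∀ t : ℝ, 0 ≤ t → ∀ ψ χ : C(M, ℝ), (∀ x, ψ x ≤ χ x) →
      ∀ x, T t ψ x ≤ T t χ x)
    (htrans : ∀ t : ℝ, 0 ≤ t → ∀ c : ℝ, 0 ≤ c → ∀ ψ : C(M, ℝ),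
      ∀ x, T t (ψ + ContinuousMap.const M c) x ≤ T t ψ x + c)
    (φ : C(M, ℝ))
    (hbdd : ∃ C : ℝ, ∀ s : ℝ, 0 ≤ s → ∀ x, |T s φ x| ≤ C)
    (ubar : C(M, ℝ))
    (hlimsup : ∀ x, ubar x = limsup (fun s : ℝ => T s φ x) atTop)
    (hunif : ∀ ε : ℝ, 0 < ε → ∃ s₀ : ℝ, ∀ s : ℝ, s₀ ≤ s → ∀ x, T s φ x ≤ ubar x + ε) :
    (∀ t : ℝ, 0 ≤ t → ∀ x, ubar x ≤ T t ubar x) ∧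
    (∀ t t' : ℝ, 0 ≤ t → t ≤ t' → ∀ x, T t ubar x ≤ T t' ubar x) := by
  obtain ⟨C, hC⟩ := hbdd
  -- `limsup` in `ℝ` is only meaningful for orbits that are eventually bounded below
  have hcobdd (x : M) : IsCoboundedUnder (· ≤ ·) atTop (fun s => T s φ x) :=
    isCoboundedUnder_le_of_eventually_le atTop (x := -C) <|
      (eventually_ge_atTop 0).mono fun s hs => (abs_le.1 (hC s hs x)).1
  have hsub : ∀ t : ℝ, 0 ≤ t → ∀ x, ubar x ≤ T t ubar x := by
    intro t ht x
    refine le_of_forall_pos_le_add fun ε hε => ?_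
    rw [hlimsup x]
    exact limsup_le_of_le (hcobdd x) <| eventually_apply_le_semigroup_apply_add hsemi hmono htrans
      hε.le (eventually_atTop.2 (hunif ε hε)) ht x
  exact ⟨hsub, fun t t' ht htt' x => semigroup_apply_mono_of_le_apply hsemi hmono hsub ht htt' x⟩

/-- If a monotone semigroup `T_t` on `C(M,ℝ)` satisfies `T_t(φ + c) ≤ T_tφ + c`
for constants `c ≥ 0`, and `ū = limsup_{t→∞} T_tφ` exists in `C(M,ℝ)` (with the
limsup attained uniformly), then `ū ≤ T_t ū` for every `t ≥ 0`, and consequently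
`t ↦ T_t ū` is pointwise non-decreasing. -/
theorem limsup_le_semigroup_image
    {M : Type*} [MetricSpace M] [CompactSpace M]
    (T : ℝ → C(M, ℝ) → C(M, ℝ))
    (hid : ∀ ψ : C(M, ℝ), T 0 ψ = ψ)
    (hsemi : ∀ t s : ℝ, 0 ≤ t → 0 ≤ s → ∀ ψ : C(M, ℝ), T (t + s) ψ = T t (T s ψ))
    (hmono : ∀ t : ℝ, 0 ≤ t → ∀ ψ χ : C(M, ℝ), (∀ x, ψ x ≤ χ x) →
      ∀ x, T t ψ x ≤ T t χ x)
    (htrans : ∀ t : ℝ, 0 ≤ t → ∀ c : ℝ, 0 ≤ c → ∀ ψ : C(M, ℝ),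
      ∀ x, T t (ψ + ContinuousMap.const M c) x ≤ T t ψ x + c)
    (φ : C(M, ℝ))
    (hbdd : ∃ C : ℝ, ∀ s : ℝ, 0 ≤ s → ∀ x, |T s φ x| ≤ C)
    (ubar : C(M, ℝ))
    (hlimsup : ∀ x, ubar x = limsup (fun s : ℝ => T s φ x) atTop)
    (hunif : ∀ ε : ℝ, 0 < ε → ∃ s₀ : ℝ, ∀ s : ℝ, s₀ ≤ s → ∀ x, T s φ x ≤ ubar x + ε) :
    (∀ t : ℝ, 0 ≤ t → ∀ x, ubar x ≤ T t ubar x) ∧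
    (∀ t t' : ℝ, 0 ≤ t → t ≤ t' → ∀ x, T t ubar x ≤ T t' ubar x) :=
  limsup_le_semigroup_image_general T hsemi hmono htrans φ hbdd ubar hlimsup hunif
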